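/- For every integer L ≥ 2, the periodic Hamiltonian H is hermitian (Hᴴ = H) and its entrywise complex conjugate satisfies H̄ = −H. Consequently, if H v = E v with v ≠ 0, then E is real and H v̄ = −E v̄, so the energy spectrum is symmetric about zero. -/

import Mathlib

open Matrix
open scoped Kronecker ComplexConjugate

noncomputable section

/-- The local two-site Hamiltonian 𝔥 = Σ_γ i(E^{γ(1)}_{γ(2)} ⊗ E^{γ(2)}_{γ(3)}
− E^{γ(2)}_{γ(3)} ⊗ E^{γ(1)}_{γ(2)}), summed over permutations γ of {1,2,3}. -/
def hloc : Matrix (Fin 3 × Fin 3) (Fin 3 × Fin 3) ℂ :=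
  ∑ γ : Equiv.Perm (Fin 3),
    Complex.I •
      ((Matrix.single (γ 0) (γ 1) (1 : ℂ)) ⊗ₖ (Matrix.single (γ 1) (γ 2) (1 : ℂ))
        - (Matrix.single (γ 1) (γ 2) (1 : ℂ)) ⊗ₖ (Matrix.single (γ 0) (γ 1) (1 : ℂ)))

def cyc {L : ℕ} (m : Fin L) : Fin L := ⟨(m.val + 1) % L, Nat.mod_lt _ m.pos⟩

/-- The two-site Hamiltonian 𝔥_{k,l}, acting as 𝔥 on the (ordered) pair of
tensor factors (k,l) and as the identity elsewhere. -/
def hTwo (L : ℕ) (k l : Fin L) : Matrix (Fin L → Fin 3) (Fin L → Fin 3) ℂ :=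
  Matrix.of fun α β =>
    hloc (α k, α l) (β k, β l) *
      ∏ m ∈ Finset.univ \ {k, l}, (if α m = β m then (1 : ℂ) else 0)

/-- The periodic Hamiltonian H = Σ_{k=1}^{L−1} 𝔥_{k,k+1} + 𝔥_{L,1}; written
cyclically as Σ_{k∈Fin L} 𝔥_{k,k+1 mod L}. -/
def Ham (L : ℕ) : Matrix (Fin L → Fin 3) (Fin L → Fin 3) ℂ :=
  ∑ k : Fin L, hTwo L k (cyc k)

/-!
Each summand of 𝔥 is `i` times a real matrix, and precomposing `γ` with the transposition
`(0 2)` exchanges its two Kronecker terms with their transposes. Hence 𝔥, every `𝔥_{k,l}` and `H`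
are hermitian and antisymmetric, so `H̄ = (Hᴴ)ᵀ = Hᵀ = -H`. Hermitian matrices have real
eigenvalues, and conjugating `H v = E v` gives `H̄ v̄ = E v̄`, i.e. `H v̄ = -E v̄`.
-/

namespace Matrix

variable {m n : Type*} [Fintype n]

theorem IsHermitian.conj_eq_of_mulVec_eq_smul {𝕜 : Type*} [RCLike 𝕜]
    {A : Matrix n n 𝕜} (hA : A.IsHermitian) {v : n → 𝕜} {E : 𝕜} (hv : v ≠ 0)
    (hAv : A *ᵥ v = E • v) : conj E = E := by
  classical
  refine (isSymmetric_toEuclideanLin_iff.mpr hA).conj_eigenvalue_eq_self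
    (Module.End.hasEigenvalue_of_hasEigenvector (x := WithLp.toLp 2 v) ⟨?_, ?_⟩)
  · rw [Module.End.mem_eigenspace_iff]
    ext i
    simp [hAv]
  · simpa using hv

theorem map_star_mulVec_star {R : Type*} [CommSemiring R] [StarRing R] (A : Matrix m n R)
    (v : n → R) : A.map star *ᵥ star v = star (A *ᵥ v) := by
  rw [star_mulVec, ← vecMul_transpose]; rfl

theorem mulVec_star_eq_neg_smul_of_map_star_eq_neg {R : Type*} [CommRing R] [StarRing R]
    {A : Matrix n n R} (hA : A.map star = -A) {v : n → R} {E : R} (hAv : A *ᵥ v = E • v) :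
    A *ᵥ star v = -star E • star v := by
  calc A *ᵥ star v = -(A.map star *ᵥ star v) := by rw [hA, neg_mulVec, neg_neg]
    _ = -star E • star v := by rw [map_star_mulVec_star, hAv, star_smul, neg_smul]

end Matrix

theorem hloc_eq_sum_swap :
    hloc = ∑ γ : Equiv.Perm (Fin 3),
      Complex.I •
        ((Matrix.single (γ 2) (γ 1) (1 : ℂ)) ⊗ₖ (Matrix.single (γ 1) (γ 0) (1 : ℂ))
          - (Matrix.single (γ 1) (γ 0) (1 : ℂ)) ⊗ₖ (Matrix.single (γ 2) (γ 1) (1 : ℂ))) := by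
  refine Fintype.sum_equiv (Equiv.mulRight (Equiv.swap 0 2)) _ _ fun γ => ?_
  simp [Equiv.swap_apply_of_ne_of_ne]

theorem conjTranspose_hloc : hlocᴴ = hloc := by
  conv_lhs => rw [hloc]
  rw [hloc_eq_sum_swap, conjTranspose_sum]
  refine Finset.sum_congr rfl fun γ _ => ?_
  simp [conjTranspose_kronecker, smul_sub, neg_add_eq_sub]

theorem transpose_hloc : hlocᵀ = -hloc := by
  conv_lhs => rw [hloc]
  rw [hloc_eq_sum_swap, transpose_sum, ← Finset.sum_neg_distrib]
  refine Finset.sum_congr rfl fun γ _ => ?_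
  simp [← kroneckerMap_transpose, smul_sub]

theorem conjTranspose_hTwo (L : ℕ) (k l : Fin L) : (hTwo L k l)ᴴ = hTwo L k l := by
  ext α β
  simp only [conjTranspose_apply, hTwo, of_apply, star_mul', star_prod, apply_ite star,
    star_one, star_zero, eq_comm (a := β _)]
  rw [← conjTranspose_apply hloc, conjTranspose_hloc]

theorem transpose_hTwo (L : ℕ) (k l : Fin L) : (hTwo L k l)ᵀ = -hTwo L k l := by
  ext α β
  rw [transpose_apply, neg_apply]
  simp only [hTwo, of_apply, eq_comm (a := β _)]
  rw [← transpose_apply hloc, transpose_hloc, neg_apply, neg_mul]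

theorem isHermitian_Ham (L : ℕ) : (Ham L).IsHermitian := by
  simp only [IsHermitian, Ham, conjTranspose_sum, conjTranspose_hTwo]

theorem transpose_Ham (L : ℕ) : (Ham L)ᵀ = -Ham L := by
  simp only [Ham, transpose_sum, transpose_hTwo, Finset.sum_neg_distrib]

theorem ham_hermitian_and_spectrum_symmetric_general (L : ℕ) :
    (Ham L)ᴴ = Ham L ∧
    (Ham L).map (starRingEnd ℂ) = -(Ham L) ∧
    ∀ (v : (Fin L → Fin 3) → ℂ) (E : ℂ), v ≠ 0 → (Ham L).mulVec v = E • v →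
      (∃ r : ℝ, E = (r : ℂ)) ∧
        (Ham L).mulVec (fun α => conj (v α)) = (-E) • (fun α => conj (v α)) := by
  have hH := isHermitian_Ham L
  have hconj : (Ham L).map star = -Ham L := by
    rw [← conjTranspose_transpose, hH.eq, transpose_Ham]
  refine ⟨hH, hconj, fun v E hv hEv => ?_⟩
  have hE : conj E = E := hH.conj_eq_of_mulVec_eq_smul hv hEv
  refine ⟨Complex.conj_eq_iff_real.mp hE, ?_⟩
  have := mulVec_star_eq_neg_smul_of_map_star_eq_neg hconj hEv
  rwa [Complex.star_def, hE] at this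

/-- for L ≥ 2 the periodic Hamiltonian is hermitian, its entrywise
complex conjugate is −H, and consequently every eigenvalue E (for an eigenvector
v ≠ 0) is real with the conjugate vector an eigenvector of eigenvalue −E. -/
theorem ham_hermitian_and_spectrum_symmetric (L : ℕ) (hL : 2 ≤ L) :
    (Ham L)ᴴ = Ham L ∧
    (Ham L).map (starRingEnd ℂ) = -(Ham L) ∧
    ∀ (v : (Fin L → Fin 3) → ℂ) (E : ℂ), v ≠ 0 → (Ham L).mulVec v = E • v →
      (∃ r : ℝ, E = (r : ℂ)) ∧
        (Ham L).mulVec (fun α => conj (v α)) = (-E) • (fun α => conj (v α)) :=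
  ham_hermitian_and_spectrum_symmetric_general L

end
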